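/- (One-step exchange inequality.) Let f be a nonnegative k-submodular function with f(0) = 0. Let x and y be k-sets with x ⊑ y, let e ∈ V with e ∉ supp(x), and let i ∈ {1,…,k} be such that f(x ⊔ (e,i)) ≥ f(x ⊔ (e,l)) for every l ∈ {1,…,k} and f(x ⊔ (e,i)) ≥ f(x). Let y' be the k-set with y'(e) = i and y'(e') = y(e') for every e' ≠ e. Then f(y) − f(y') ≤ 2·(f(x ⊔ (e,i)) − f(x)). -/

import Mathlib

/-- The meet `x ⊓ y` of two `k`-sets, with components `Xᵢ ∩ Yᵢ`. -/
def sqcap {V : Type*} (x y : V → ℕ) : V → ℕ :=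
  fun e => if x e = y e then x e else 0

/-- The join `x ⊔ y` of two `k`-sets, with components
`Zᵢ = (Xᵢ ∪ Yᵢ) \ ⋃_{j ≠ i} (Xⱼ ∪ Yⱼ)`. -/
def sqcup {V : Type*} (x y : V → ℕ) : V → ℕ :=
  fun e =>
    if x e = 0 then y e
    else if y e = 0 then x e
    else if x e = y e then x e else 0

/-- A `k`-set: every element gets a position in `{0, 1, …, k}`
(`0` meaning unselected). -/
def IsKSet {V : Type*} (k : ℕ) (x : V → ℕ) : Prop := ∀ e, x e ≤ k

/-- `x ⊑ y`: every component of `x` is contained in the corresponding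
component of `y`. -/
def KLE {V : Type*} (x y : V → ℕ) : Prop := ∀ e, x e ≠ 0 → y e = x e

/-- The singleton `k`-set `(e, i)`. -/
def singl {V : Type*} [DecidableEq V] (e : V) (i : ℕ) : V → ℕ :=
  fun e' => if e' = e then i else 0

/-- `k`-submodularity: `f x + f y ≥ f (x ⊓ y) + f (x ⊔ y)` for all `k`-sets. -/
def KSubmodular {V : Type*} (k : ℕ) (f : (V → ℕ) → ℝ) : Prop :=
  ∀ x y : V → ℕ, IsKSet k x → IsKSet k y →
    f x + f y ≥ f (sqcap x y) + f (sqcup x y)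

/-- The marginal gain `Δ_{(e,i)} f(x) = f (x ⊔ (e,i)) - f x`. -/
def marg {V : Type*} [DecidableEq V] (f : (V → ℕ) → ℝ) (e : V) (i : ℕ)
    (x : V → ℕ) : ℝ :=
  f (sqcup x (singl e i)) - f x

/-- The cost of a `k`-set: the total cost of its support. -/
noncomputable def cost {V : Type*} [Fintype V] (c : V → ℝ) (x : V → ℕ) : ℝ :=
  ∑ e ∈ Finset.univ.filter (fun e => x e ≠ 0), c e

/-! Two consequences of `k`-submodularity drive the proof. Diminishing returns: if `x ⊑ y` and
`e` is unselected in both, selecting `e` in `y` gains at most as much as selecting it in `x`.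
Pairwise monotonicity: for `a ≠ b` the meet and join of `w[e ↦ a]` and `w[e ↦ b]` are both `w`,
so `2 f(w) ≤ f(w[e ↦ a]) + f(w[e ↦ b])`.

If `y(e) = 0`, pairwise monotonicity at `y` with some position `l ≠ i` bounds `f y - f y'` by the
gain of `(e,l)` at `y`, hence at `x`. If `y(e) = j ∉ {0, i}`, it is applied at `y` with `e`
removed, which bounds `f y - f y'` by twice the gain of `(e,j)` there, hence at `x`. In either case
the optimality of `i` finishes the proof. -/

section KSet

variable {V : Type*} [DecidableEq V]

theorem IsKSet.sqcup_singl {k : ℕ} {x : V → ℕ} (hx : IsKSet k x) (e : V) {m : ℕ}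
    (hm : m ≤ k) : IsKSet k (sqcup x (singl e m)) := by
  intro e'
  have := hx e'
  simp only [sqcup, singl]
  split_ifs <;> omega

theorem IsKSet.update {k : ℕ} {y : V → ℕ} (hy : IsKSet k y) (e : V) {m : ℕ} (hm : m ≤ k) :
    IsKSet k (Function.update y e m) := by
  intro e'
  rw [Function.update_apply]
  split
  · exact hm
  · exact hy e'

theorem KLE.update_zero {x y : V → ℕ} (hxy : KLE x y) {e : V} (hxe : x e = 0) :
    KLE x (Function.update y e 0) := by
  intro e' h
  rw [Function.update_of_ne (by rintro rfl; exact h hxe)]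
  exact hxy e' h

variable {x y : V → ℕ} {e : V}

theorem sqcap_sqcup_singl_of_kle (hxy : KLE x y) (hxe : x e = 0) (hye : y e = 0) (m : ℕ) :
    sqcap y (sqcup x (singl e m)) = x := by
  funext e'
  by_cases h : e' = e
  · subst h; simp [sqcap, sqcup, singl, hxe, hye]
  · by_cases hx0 : x e' = 0
    · simp [sqcap, sqcup, singl, h, hx0]
    · simp [sqcap, sqcup, singl, h, hx0, hxy e' hx0]

theorem sqcup_sqcup_singl_of_kle (hxy : KLE x y) (hxe : x e = 0) (hye : y e = 0) (m : ℕ) :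
    sqcup y (sqcup x (singl e m)) = Function.update y e m := by
  funext e'
  by_cases h : e' = e
  · subst h; simp [sqcup, singl, hxe, hye]
  · by_cases hx0 : x e' = 0
    · by_cases hy0 : y e' = 0 <;> simp [sqcup, singl, h, hx0, hy0]
    · simp [sqcup, singl, h, hx0, hxy e' hx0]

end KSet

namespace KSubmodular

variable {V : Type*} [DecidableEq V] {k : ℕ} {f : (V → ℕ) → ℝ}

theorem update_sub_le_sqcup_singl_sub (hsub : KSubmodular k f) {x y : V → ℕ}
    (hx : IsKSet k x) (hy : IsKSet k y) (hxy : KLE x y) {e : V} (hxe : x e = 0)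
    (hye : y e = 0) {m : ℕ} (hm : m ≤ k) :
    f (Function.update y e m) - f y ≤ f (sqcup x (singl e m)) - f x := by
  have h := hsub y _ hy (hx.sqcup_singl e hm)
  rw [sqcap_sqcup_singl_of_kle hxy hxe hye, sqcup_sqcup_singl_of_kle hxy hxe hye] at h
  linarith

theorem two_mul_le_update_add_update (hsub : KSubmodular k f) {w : V → ℕ} (hw : IsKSet k w)
    {e : V} (hwe : w e = 0) {a b : ℕ} (ha : a ≠ 0) (hb : b ≠ 0) (hab : a ≠ b)
    (hak : a ≤ k) (hbk : b ≤ k) :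
    2 * f w ≤ f (Function.update w e a) + f (Function.update w e b) := by
  have h := hsub _ _ (hw.update e hak) (hw.update e hbk)
  have hcap : sqcap (Function.update w e a) (Function.update w e b) = w := by
    funext e'
    by_cases h : e' = e
    · subst h; simp [sqcap, hab, hwe]
    · simp [sqcap, Function.update_of_ne h]
  have hcup : sqcup (Function.update w e a) (Function.update w e b) = w := by
    funext e'
    by_cases h : e' = e
    · subst h; simp [sqcup, ha, hb, hab, hwe]
    · by_cases hw0 : w e' = 0 <;> simp [sqcup, Function.update_of_ne h, hw0]
  rw [hcap, hcup] at h
  linarith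

end KSubmodular

theorem stmt6_general {V : Type*} [DecidableEq V]
    (k : ℕ) (hk : 2 ≤ k)
    (f : (V → ℕ) → ℝ)
    (hsub : KSubmodular k f)
    (x y : V → ℕ) (hx : IsKSet k x) (hy : IsKSet k y) (hxy : KLE x y)
    (e : V) (he : x e = 0) (i : ℕ) (hi1 : 1 ≤ i) (hi2 : i ≤ k)
    (hbest : ∀ l, 1 ≤ l → l ≤ k → f (sqcup x (singl e l)) ≤ f (sqcup x (singl e i)))
    (hgain : f x ≤ f (sqcup x (singl e i))) :
    f y - f (Function.update y e i) ≤ 2 * (f (sqcup x (singl e i)) - f x) := by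
  by_cases hyi : y e = i
  · subst hyi
    rw [Function.update_eq_self]
    linarith
  by_cases hy0 : y e = 0
  · obtain ⟨l, hl1, hlk, hli⟩ : ∃ l, 1 ≤ l ∧ l ≤ k ∧ l ≠ i :=
      ⟨if i = 1 then 2 else 1, by split <;> omega, by split <;> omega, by split <;> omega⟩
    have hpair := hsub.two_mul_le_update_add_update hy hy0 (by omega) (by omega) hli.symm hi2 hlk
    have hdim := hsub.update_sub_le_sqcup_singl_sub hx hy hxy he hy0 hlk
    linarith [hbest l hl1 hlk]
  · set y₀ := Function.update y e 0
    have hy₀ : IsKSet k y₀ := hy.update e (Nat.zero_le k)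
    have hy₀e : y₀ e = 0 := Function.update_self e 0 y
    have hy₀y : Function.update y₀ e (y e) = y := by
      rw [Function.update_idem, Function.update_eq_self]
    have hpair := hsub.two_mul_le_update_add_update hy₀ hy₀e (by omega) hy0 (Ne.symm hyi)
      hi2 (hy e)
    have hdim := hsub.update_sub_le_sqcup_singl_sub hx hy₀ (hxy.update_zero he) he hy₀e (hy e)
    rw [Function.update_idem] at hpair
    rw [hy₀y] at hpair hdim
    linarith [hbest (y e) (by omega) (hy e)]

/-- one-step exchange inequality: for `x ⊑ y`, `e ∉ supp(x)` and
a best nonnegative position `i` for `e` at `x`, replacing the position of `e`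
in `y` by `i` loses at most twice the gain at `x`. -/
theorem stmt6 {V : Type*} [Fintype V] [DecidableEq V]
    (k : ℕ) (hk : 2 ≤ k)
    (f : (V → ℕ) → ℝ)
    (hsub : KSubmodular k f)
    (hnn : ∀ x : V → ℕ, IsKSet k x → 0 ≤ f x)
    (hf0 : f (fun _ => 0) = 0)
    (x y : V → ℕ) (hx : IsKSet k x) (hy : IsKSet k y) (hxy : KLE x y)
    (e : V) (he : x e = 0) (i : ℕ) (hi1 : 1 ≤ i) (hi2 : i ≤ k)
    (hbest : ∀ l, 1 ≤ l → l ≤ k → f (sqcup x (singl e l)) ≤ f (sqcup x (singl e i)))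
    (hgain : f x ≤ f (sqcup x (singl e i))) :
    f y - f (Function.update y e i) ≤ 2 * (f (sqcup x (singl e i)) - f x) :=
  stmt6_general k hk f hsub x y hx hy hxy e he i hi1 hi2 hbest hgain
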